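/- Let T = R_{2r+1}(P^1, …, P^{2r+1}) be the composition of tournaments P^1, …, P^{2r+1} over the highly regular tournament R_{2r+1}, with r ≥ 1, and let d_i = dim(P^i) for each i. Then dim(T) ≥ max over pairs i ≠ j in {1, …, 2r+1} of (d_i + d_j + r). -/

import Mathlib

/-- A tournament: an irreflexive relation such that for every pair of distinct
vertices exactly one of the two directions holds. -/
def IsTournament {V : Type*} (rel : V → V → Prop) : Prop :=
  (∀ v, ¬ rel v v) ∧ ∀ u v : V, u ≠ v → (rel u v ↔ ¬ rel v u)

/-- A set `S` is acyclic (transitive) in a tournament `rel`: the relation restricted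
to `S` is transitive; for a tournament this is equivalent to the restriction being a
strict linear order, i.e. to the induced subtournament having no directed cycle. -/
def AcyclicIn {V : Type*} (rel : V → V → Prop) (S : Set V) : Prop :=
  ∀ a ∈ S, ∀ b ∈ S, ∀ c ∈ S, rel a b → rel b c → rel a c

/-- The (acyclic) chromatic number: the least `k` such that there is a coloring of the
vertices with `k` colors all of whose color classes are acyclic sets. -/
noncomputable def chromaticNumber {V : Type*} (rel : V → V → Prop) : ℕ :=
  sInf {k : ℕ | ∃ c : V → Fin k, ∀ i : Fin k, AcyclicIn rel {v | c v = i}}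

/-- The dimension of the acyclic complex of a tournament: the maximum size of an
acyclic set, minus one. -/
noncomputable def acyDim {V : Type*} (rel : V → V → Prop) : ℕ :=
  sSup {n : ℕ | ∃ S : Finset V, AcyclicIn rel ↑S ∧ S.card = n} - 1

/-- The edge relation of the highly regular tournament `R_{2r+1}` on `ZMod (2r+1)`:
`i → j` iff `j ≡ i + l (mod 2r+1)` for some `1 ≤ l ≤ r`. -/
def hrRel (r : ℕ) (i j : ZMod (2 * r + 1)) : Prop :=
  ∃ l : ℕ, 1 ≤ l ∧ l ≤ r ∧ j = i + (l : ZMod (2 * r + 1))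

/-- The edge relation of the composition `R_{2q+1}(P^1, …, P^{2q+1})` of the tournaments
`relP i` over the highly regular tournament `R_{2q+1}`: inside a block use the block's
relation, between different blocks use the highly regular relation on the indices. -/
def compTournRel (q : ℕ) {V : ZMod (2 * q + 1) → Type*} (relP : ∀ i, V i → V i → Prop)
    (u v : Σ i, V i) : Prop :=
  (∃ h : u.1 = v.1, relP v.1 (h ▸ u.2) v.2) ∨ (u.1 ≠ v.1 ∧ hrRel q u.1 v.1)


/-!
The blocks `i, i + 1, …, i + r` form a transitive subtournament of `R_{2r+1}`, and any two
distinct blocks lie in one such arc of `r + 1` consecutive blocks. Over a transitive set `B` of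
blocks, the union of acyclic sets chosen inside the blocks of `B` is acyclic in the composition,
since `T` orders vertices of different blocks as `R_{2r+1}` orders their blocks. A maximum
acyclic set in every block of the arc gives `∑_{k ∈ B} (d_k + 1) ≥ d_i + d_j + r + 1` vertices.
-/

open Finset

section AcyclicDimension

variable {V : Type*} (rel : V → V → Prop)

theorem acyclicIn_singleton (v : V) : AcyclicIn rel {v} := by
  rintro a rfl b rfl c rfl hab -
  exact hab

variable [Fintype V]

theorem bddAbove_card_acyclicIn :
    BddAbove {n : ℕ | ∃ S : Finset V, AcyclicIn rel ↑S ∧ S.card = n} :=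
  ⟨Fintype.card V, by rintro n ⟨S, -, rfl⟩; exact S.card_le_univ⟩

variable {rel}

theorem AcyclicIn.card_le_acyDim_add_one {S : Finset V} (hS : AcyclicIn rel ↑S) :
    S.card ≤ acyDim rel + 1 := by
  have := le_csSup (bddAbove_card_acyclicIn rel) ⟨S, hS, rfl⟩
  rw [acyDim]
  omega

variable (rel)

theorem exists_acyclicIn_card_eq_acyDim_add_one [Nonempty V] :
    ∃ S : Finset V, AcyclicIn rel ↑S ∧ S.card = acyDim rel + 1 := by
  have hone : 1 ∈ {n : ℕ | ∃ S : Finset V, AcyclicIn rel ↑S ∧ S.card = n} :=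
    ⟨{Classical.arbitrary V}, by simpa using acyclicIn_singleton rel _, card_singleton _⟩
  obtain ⟨S, hS, hcard⟩ := Nat.sSup_mem ⟨1, hone⟩ (bddAbove_card_acyclicIn rel)
  have := le_csSup (bddAbove_card_acyclicIn rel) hone
  exact ⟨S, hS, by rw [acyDim]; omega⟩

end AcyclicDimension

section HighlyRegular

variable {q : ℕ}

theorem hrRel.ne {i j : ZMod (2 * q + 1)} (h : hrRel q i j) : i ≠ j := by
  obtain ⟨l, hl1, hlq, rfl⟩ := h
  intro hi
  have hdvd := (ZMod.natCast_eq_zero_iff l (2 * q + 1)).mp (by simpa using hi)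
  have := Nat.le_of_dvd (by omega) hdvd
  omega

theorem natCast_inj_of_lt {a b : ℕ} (ha : a < 2 * q + 1) (hb : b < 2 * q + 1)
    (h : (a : ZMod (2 * q + 1)) = b) : a = b := by
  rwa [ZMod.natCast_eq_natCast_iff', Nat.mod_eq_of_lt ha, Nat.mod_eq_of_lt hb] at h

theorem hrRel_add_natCast_iff (i : ZMod (2 * q + 1)) {a b : ℕ} (ha : a ≤ q) (hb : b ≤ q) :
    hrRel q (i + a) (i + b) ↔ a < b := by
  constructor
  · rintro ⟨l, hl1, hlq, heq⟩
    rw [add_assoc, add_right_inj, ← Nat.cast_add] at heq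
    have := natCast_inj_of_lt (by omega) (by omega) heq
    omega
  · intro hab
    refine ⟨b - a, by omega, by omega, ?_⟩
    rw [Nat.cast_sub hab.le]
    ring

def hrArc (q : ℕ) (i : ZMod (2 * q + 1)) : Finset (ZMod (2 * q + 1)) :=
  (range (q + 1)).image fun l : ℕ => i + l

theorem mem_hrArc {i k : ZMod (2 * q + 1)} :
    k ∈ hrArc q i ↔ ∃ l ≤ q, i + l = k := by
  simp [hrArc]

theorem self_mem_hrArc (i : ZMod (2 * q + 1)) : i ∈ hrArc q i :=
  mem_hrArc.mpr ⟨0, Nat.zero_le _, by simp⟩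

theorem mem_hrArc_of_val_sub_le {i j : ZMod (2 * q + 1)} (h : (j - i).val ≤ q) :
    j ∈ hrArc q i :=
  mem_hrArc.mpr ⟨_, h, by rw [ZMod.natCast_zmod_val]; ring⟩

theorem card_hrArc (i : ZMod (2 * q + 1)) : (hrArc q i).card = q + 1 := by
  rw [hrArc, card_image_of_injOn, card_range]
  intro a ha b hb h
  simp only [coe_range, Set.mem_Iio] at ha hb
  exact natCast_inj_of_lt (by omega) (by omega) (add_left_cancel h)

theorem acyclicIn_hrArc (i : ZMod (2 * q + 1)) : AcyclicIn (hrRel q) ↑(hrArc q i) := by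
  simp only [AcyclicIn, mem_coe, mem_hrArc]
  rintro _ ⟨a, ha, rfl⟩ _ ⟨b, hb, rfl⟩ _ ⟨c, hc, rfl⟩ hab hbc
  rw [hrRel_add_natCast_iff i ha hb] at hab
  rw [hrRel_add_natCast_iff i hb hc] at hbc
  exact (hrRel_add_natCast_iff i ha hc).mpr (hab.trans hbc)

theorem exists_hrArc_mem_mem {i j : ZMod (2 * q + 1)} (hij : i ≠ j) :
    ∃ i₀, i ∈ hrArc q i₀ ∧ j ∈ hrArc q i₀ := by
  by_cases h : (j - i).val ≤ q
  · exact ⟨i, self_mem_hrArc i, mem_hrArc_of_val_sub_le h⟩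
  · refine ⟨j, mem_hrArc_of_val_sub_le ?_, self_mem_hrArc j⟩
    have hval := (j - i).val_lt
    rw [← neg_sub, ZMod.neg_val, if_neg (sub_ne_zero.mpr hij.symm)]
    omega

end HighlyRegular

section Composition

variable {q : ℕ} {V : ZMod (2 * q + 1) → Type*} {relP : ∀ i, V i → V i → Prop}

theorem compTournRel_mk_mk {k : ZMod (2 * q + 1)} {x y : V k} :
    compTournRel q relP ⟨k, x⟩ ⟨k, y⟩ ↔ relP k x y := by
  simp [compTournRel]

theorem compTournRel_iff_of_fst_ne {u v : Σ i, V i} (h : u.1 ≠ v.1) :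
    compTournRel q relP u v ↔ hrRel q u.1 v.1 := by
  simp [compTournRel, h]

theorem compTournRel_of_hrRel {u v : Σ i, V i} (h : hrRel q u.1 v.1) :
    compTournRel q relP u v :=
  Or.inr ⟨h.ne, h⟩

theorem AcyclicIn.sigma {B : Finset (ZMod (2 * q + 1))} {F : ∀ k, Finset (V k)}
    (hB : AcyclicIn (hrRel q) ↑B) (hF : ∀ k, AcyclicIn (relP k) ↑(F k)) :
    AcyclicIn (compTournRel q relP) ↑(B.sigma F) := by
  rintro ⟨ka, a⟩ ha ⟨kb, b⟩ hb ⟨kc, c⟩ hc hab hbc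
  simp only [mem_coe, mem_sigma] at ha hb hc
  by_cases hkab : ka = kb
  · subst hkab
    by_cases hkbc : ka = kc
    · subst hkbc
      rw [compTournRel_mk_mk] at hab hbc ⊢
      exact hF ka a ha.2 b hb.2 c hc.2 hab hbc
    · rwa [compTournRel_iff_of_fst_ne hkbc] at hbc ⊢
  · rw [compTournRel_iff_of_fst_ne hkab] at hab
    by_cases hkbc : kb = kc
    · subst hkbc
      exact compTournRel_of_hrRel hab
    · rw [compTournRel_iff_of_fst_ne hkbc] at hbc
      exact compTournRel_of_hrRel (hB ka ha.1 kb hb.1 kc hc.1 hab hbc)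

theorem sum_acyDim_add_one_le_acyDim_compTournRel [∀ i, Fintype (V i)] [∀ i, Nonempty (V i)]
    {B : Finset (ZMod (2 * q + 1))} (hB : AcyclicIn (hrRel q) ↑B) :
    ∑ k ∈ B, (acyDim (relP k) + 1) ≤ acyDim (compTournRel q relP) + 1 := by
  choose F hF hcard using fun k => exists_acyclicIn_card_eq_acyDim_add_one (relP k)
  calc ∑ k ∈ B, (acyDim (relP k) + 1) = (B.sigma F).card := by simp [card_sigma, hcard]
    _ ≤ acyDim (compTournRel q relP) + 1 := (hB.sigma hF).card_le_acyDim_add_one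

end Composition

theorem stmt8_general (r : ℕ) (V : ZMod (2 * r + 1) → Type)
    [∀ i, Fintype (V i)] [∀ i, Nonempty (V i)]
    (relP : ∀ i, V i → V i → Prop) :
    ∀ i j : ZMod (2 * r + 1), i ≠ j →
      acyDim (relP i) + acyDim (relP j) + r ≤ acyDim (compTournRel r relP) := by
  intro i j hij
  obtain ⟨i₀, hi, hj⟩ := exists_hrArc_mem_mem hij
  have hsum := sum_acyDim_add_one_le_acyDim_compTournRel (relP := relP) (acyclicIn_hrArc i₀)
  have hpair : acyDim (relP i) + acyDim (relP j) ≤ ∑ k ∈ hrArc r i₀, acyDim (relP k) := by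
    rw [← sum_pair (f := fun k => acyDim (relP k)) hij]
    exact sum_le_sum_of_subset (insert_subset hi (singleton_subset_iff.mpr hj))
  rw [sum_add_distrib, sum_const, card_hrArc, smul_eq_mul, mul_one] at hsum
  omega

/-- Let `T = R_{2r+1}(P^1, …, P^{2r+1})` with `r ≥ 1` and `dim(P^i) = d_i`. Then
`dim(T) ≥ max_{i ≠ j} (d_i + d_j + r)`. -/
theorem stmt8 (r : ℕ) (hr : 1 ≤ r) (V : ZMod (2 * r + 1) → Type)
    [∀ i, Fintype (V i)] [∀ i, Nonempty (V i)]
    (relP : ∀ i, V i → V i → Prop) (htour : ∀ i, IsTournament (relP i)) :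
    ∀ i j : ZMod (2 * r + 1), i ≠ j →
      acyDim (relP i) + acyDim (relP j) + r ≤ acyDim (compTournRel r relP) :=
  stmt8_general r V relP
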